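/- Let η: X → [0,1] be measurable, P a probability measure on X, φ the hinge loss, and C*(x) = sign(2η(x)-1). For any measurable f: X → [-1,1], the excess hinge risk satisfies E[φ(Y f(X))] - E[φ(Y C*(X))] = ∫ |f(x) - C*(x)| · |2η(x) - 1| dP(x), where Y ∈ {-1,1} with P(Y=1|X=x) = η(x). -/

import Mathlib

/-!
On `[-1, 1]` the hinge loss is affine, so the conditional risk of a prediction `t` at a
point with `P(Y = 1 | X = x) = e` is `1 - t (2e - 1)`. The excess over the Bayes prediction
`c ∈ {±1}` is therefore `(c - t)(2e - 1)`, and both factors have the sign of `2e - 1`.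
-/

open MeasureTheory

noncomputable section

def condHingeRisk (e t : ℝ) : ℝ := e * max (1 - t) 0 + (1 - e) * max (1 + t) 0

def bayesClassifier (e : ℝ) : ℝ := if 2 * e - 1 > 0 then 1 else -1

end

lemma condHingeRisk_eq_of_mem_Icc (e : ℝ) {t : ℝ} (ht : t ∈ Set.Icc (-1 : ℝ) 1) :
    condHingeRisk e t = 1 - t * (2 * e - 1) := by
  obtain ⟨ht₀, ht₁⟩ := ht
  rw [condHingeRisk, max_eq_left (by linarith), max_eq_left (by linarith)]
  ring

lemma bayesClassifier_mem_Icc (e : ℝ) : bayesClassifier e ∈ Set.Icc (-1 : ℝ) 1 := by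
  unfold bayesClassifier
  split_ifs <;> norm_num

lemma abs_sub_bayesClassifier_mul_abs {t : ℝ} (ht : t ∈ Set.Icc (-1 : ℝ) 1) (e : ℝ) :
    |t - bayesClassifier e| * |2 * e - 1| = (bayesClassifier e - t) * (2 * e - 1) := by
  obtain ⟨ht₀, ht₁⟩ := ht
  unfold bayesClassifier
  split_ifs with he
  · rw [abs_of_nonpos (by linarith), abs_of_pos he]
    ring
  · rw [abs_of_nonneg (by linarith), abs_of_nonpos (not_lt.mp he)]
    ring

lemma condHingeRisk_sub_bayesClassifier {t : ℝ} (ht : t ∈ Set.Icc (-1 : ℝ) 1) (e : ℝ) :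
    condHingeRisk e t - condHingeRisk e (bayesClassifier e)
      = |t - bayesClassifier e| * |2 * e - 1| := by
  rw [condHingeRisk_eq_of_mem_Icc e ht,
    condHingeRisk_eq_of_mem_Icc e (bayesClassifier_mem_Icc e),
    abs_sub_bayesClassifier_mul_abs ht]
  ring

lemma Measurable.bayesClassifier {X : Type*} [MeasurableSpace X] {η : X → ℝ}
    (hη : Measurable η) : Measurable fun x => bayesClassifier (η x) :=
  Measurable.ite (measurableSet_lt measurable_const (by fun_prop)) measurable_const
    measurable_const

lemma integrable_condHingeRisk {X : Type*} [MeasurableSpace X] (P : Measure X)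
    [IsFiniteMeasure P] {η g : X → ℝ} (hη : Measurable η) (hg : Measurable g)
    (hη01 : ∀ x, η x ∈ Set.Icc (0 : ℝ) 1) (hg1 : ∀ x, g x ∈ Set.Icc (-1 : ℝ) 1) :
    Integrable (fun x => condHingeRisk (η x) (g x)) P := by
  refine Integrable.of_bound (by unfold condHingeRisk; fun_prop) 2
    (Filter.Eventually.of_forall fun x => ?_)
  obtain ⟨hη₀, hη₁⟩ := hη01 x
  obtain ⟨hg₀, hg₁⟩ := hg1 x
  rw [condHingeRisk_eq_of_mem_Icc _ (hg1 x), Real.norm_eq_abs, abs_le]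
  constructor <;> nlinarith

/-- The excess hinge risk of a `[-1,1]`-valued function `f` over the Bayes classifier
`C*(x) = sign (2η(x) - 1)` equals `∫ |f - C*|·|2η - 1| dP`. -/
theorem excess_hinge_risk_eq
    {X : Type*} [MeasurableSpace X] (P : Measure X) [IsProbabilityMeasure P]
    (η f : X → ℝ) (hη : Measurable η) (hf : Measurable f)
    (hη01 : ∀ x, η x ∈ Set.Icc (0 : ℝ) 1) (hf1 : ∀ x, f x ∈ Set.Icc (-1 : ℝ) 1)
    (Cstar : X → ℝ) (hC : ∀ x, Cstar x = if 2 * η x - 1 > 0 then 1 else -1) :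
    (∫ x, (η x * max (1 - f x) 0 + (1 - η x) * max (1 + f x) 0) ∂P)
      - (∫ x, (η x * max (1 - Cstar x) 0 + (1 - η x) * max (1 + Cstar x) 0) ∂P)
    = ∫ x, |f x - Cstar x| * |2 * η x - 1| ∂P := by
  obtain rfl : Cstar = fun x => bayesClassifier (η x) := funext hC
  have hf_int := integrable_condHingeRisk P hη hf hη01 hf1
  have hCstar_int := integrable_condHingeRisk P hη hη.bayesClassifier hη01
    fun x => bayesClassifier_mem_Icc (η x)
  change (∫ x, condHingeRisk (η x) (f x) ∂P)
      - (∫ x, condHingeRisk (η x) (bayesClassifier (η x)) ∂P)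
    = ∫ x, |f x - bayesClassifier (η x)| * |2 * η x - 1| ∂P
  rw [← integral_sub hf_int hCstar_int]
  exact integral_congr_ae (Filter.Eventually.of_forall fun x =>
    condHingeRisk_sub_bayesClassifier (hf1 x) (η x))
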